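/- arXiv:2604.01808 — 2 statements merged into one kernel-verified Lean document; each statement's English description precedes it below -/
import Mathlib

section
/- For every very simple 2-colouring f of pairs from a finite set S, the product of the size of the largest homogeneous set of colour 0 and the size of the largest homogeneous set of colour 1 is at least |S|. -/
/-- Number of indices where consecutive entries of a boolean sequence differ. -/
def changes (s : List Bool) : ℕ :=
  ((s.zip s.tail).filter fun p => p.1 != p.2).length

/-- Number of maximal constant blocks of a boolean sequence. -/
def blocks (s : List Bool) : ℕ :=
  if s = [] then 0 else changes s + 1

/-- The sequence ⟨f x y : y ∈ A, y > x⟩ in increasing order of y. -/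
def seqAfter (f : ℕ → ℕ → Bool) (A : Finset ℕ) (x : ℕ) : List Bool :=
  (Finset.sort (A.filter fun y => x < y) (· ≤ ·)).map (f x)

/-- `f` is at most `k`-unstable on `A`: each sequence f(x,−) has at most k maximal constant blocks. -/
def AtMostUnstable (f : ℕ → ℕ → Bool) (A : Finset ℕ) (k : ℕ) : Prop :=
  ∀ x ∈ A, blocks (seqAfter f A x) ≤ k

/-- `H` is homogeneous for `f` with colour `b`. -/
def HomogOf (f : ℕ → ℕ → Bool) (H : Finset ℕ) (b : Bool) : Prop :=
  ∀ x ∈ H, ∀ y ∈ H, x < y → f x y = b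

/-- `H` is homogeneous for `f`. -/
def Homogeneous (f : ℕ → ℕ → Bool) (H : Finset ℕ) : Prop :=
  ∃ b, HomogOf f H b

/-- Very simple colourings (Erdős–Hajnal), as a predicate on (finite set, colouring). -/
inductive VerySimple : Finset ℕ → (ℕ → ℕ → Bool) → Prop
  | single (a : ℕ) (f : ℕ → ℕ → Bool) : VerySimple {a} f
  | join (S₁ S₂ : Finset ℕ) (f : ℕ → ℕ → Bool) (b : Bool)
      (hd : Disjoint S₁ S₂)
      (h₁ : VerySimple S₁ f) (h₂ : VerySimple S₂ f)
      (hcross : ∀ x ∈ S₁, ∀ y ∈ S₂, (x < y → f x y = b) ∧ (y < x → f y x = b)) :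
      VerySimple (S₁ ∪ S₂) f

/-- The list `s` contains a run of `k+1` equal consecutive entries. -/
def hasRunL (k : ℕ) (s : List Bool) : Prop :=
  ∃ i, i + k < s.length ∧
    ∀ a b, i ≤ a → a ≤ i + k → i ≤ b → b ≤ i + k → s.getD a false = s.getD b false

/-- The least level `e ≤ t` at which `x` and `y` lie in the same interval of length `s^e`. -/
def splitLevel (s t x y : ℕ) : ℕ :=
  (((List.range (t + 1)).find? fun e => x / s ^ e == y / s ^ e).getD t)

/-- The hierarchical colouring of `[s^t]` built from a base colouring `g` on `[s]`. -/
def hierColor (s t : ℕ) (g : ℕ → ℕ → Bool) (x y : ℕ) : Bool :=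
  g ((x / s ^ (splitLevel s t x y - 1)) % s) ((y / s ^ (splitLevel s t x y - 1)) % s)


lemma homog_union_cross {f : ℕ → ℕ → Bool} {S₁ S₂ A B : Finset ℕ} {b : Bool}
    (hA : A ⊆ S₁) (hB : B ⊆ S₂)
    (hcross : ∀ x ∈ S₁, ∀ y ∈ S₂, (x < y → f x y = b) ∧ (y < x → f y x = b))
    (h1 : HomogOf f A b) (h2 : HomogOf f B b) : HomogOf f (A ∪ B) b := by
  intro x hx y hy hxy
  rcases Finset.mem_union.1 hx with hx | hx <;> rcases Finset.mem_union.1 hy with hy | hy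
  · exact h1 x hx y hy hxy
  · exact (hcross x (hA hx) y (hB hy)).1 hxy
  · exact (hcross y (hA hy) x (hB hx)).2 hxy
  · exact h2 x hx y hy hxy

theorem stmt3 (S : Finset ℕ) (f : ℕ → ℕ → Bool) (h : VerySimple S f) :
    ∃ H₀ ⊆ S, ∃ H₁ ⊆ S, HomogOf f H₀ false ∧ HomogOf f H₁ true ∧
      S.card ≤ H₀.card * H₁.card := by
  induction h with
  | single a f =>
    refine ⟨{a}, Finset.Subset.refl _, {a}, Finset.Subset.refl _, ?_, ?_, by simp⟩ <;>
    · intro x hx y hy hxy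
      simp only [Finset.mem_singleton] at hx hy
      omega
  | join S₁ S₂ f b hd h₁ h₂ hcross ih₁ ih₂ =>
    obtain ⟨A₀, hA₀S, A₁, hA₁S, hA₀, hA₁, hA⟩ := ih₁
    obtain ⟨B₀, hB₀S, B₁, hB₁S, hB₀, hB₁, hB⟩ := ih₂
    have hcard : (S₁ ∪ S₂).card = S₁.card + S₂.card :=
      Finset.card_union_of_disjoint hd
    cases b with
    | false =>
      have hdis : Disjoint A₀ B₀ := hd.mono hA₀S hB₀S
      have hu : (A₀ ∪ B₀).card = A₀.card + B₀.card := Finset.card_union_of_disjoint hdis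
      by_cases hc : A₁.card ≤ B₁.card
      · refine ⟨A₀ ∪ B₀, Finset.union_subset_union hA₀S hB₀S,
          B₁, hB₁S.trans Finset.subset_union_right,
          homog_union_cross hA₀S hB₀S hcross hA₀ hB₀, hB₁, ?_⟩
        rw [hcard, hu]
        nlinarith
      · refine ⟨A₀ ∪ B₀, Finset.union_subset_union hA₀S hB₀S,
          A₁, hA₁S.trans Finset.subset_union_left,
          homog_union_cross hA₀S hB₀S hcross hA₀ hB₀, hA₁, ?_⟩
        rw [hcard, hu]
        nlinarith
    | true =>
      have hdis : Disjoint A₁ B₁ := hd.mono hA₁S hB₁S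
      have hu : (A₁ ∪ B₁).card = A₁.card + B₁.card := Finset.card_union_of_disjoint hdis
      by_cases hc : A₀.card ≤ B₀.card
      · refine ⟨B₀, hB₀S.trans Finset.subset_union_right,
          A₁ ∪ B₁, Finset.union_subset_union hA₁S hB₁S,
          hB₀, homog_union_cross hA₁S hB₁S hcross hA₁ hB₁, ?_⟩
        rw [hcard, hu]
        nlinarith
      · refine ⟨A₀, hA₀S.trans Finset.subset_union_left,
          A₁ ∪ B₁, Finset.union_subset_union hA₁S hB₁S,
          hA₀, homog_union_cross hA₁S hB₁S hcross hA₁ hB₁, ?_⟩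
        rw [hcard, hu]
        nlinarith
end

section
/- There exists a constant C such that for all d ≥ 1 and all k ≥ C: for every 2-colouring f of pairs from {0,...,k^{2d}−1} that is at most k-unstable, there is a subset A of size 2^d such that the restriction of f to pairs from A is a very simple colouring. -/
lemma changes_nil : changes [] = 0 := rfl
lemma changes_single (a : Bool) : changes [a] = 0 := rfl

lemma changes_cons_cons (a b : Bool) (l : List Bool) :
    changes (a :: b :: l) = (if a != b then 1 else 0) + changes (b :: l) := by
  simp [changes, List.filter_cons]
  split <;> simp [Nat.add_comm]

lemma changes_le_cons (a : Bool) (l : List Bool) : changes l ≤ changes (a :: l) := by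
  cases l with
  | nil => simp [changes_nil]
  | cons x t => rw [changes_cons_cons]; omega

lemma changes_cons_le_cons (b x : Bool) (l : List Bool) :
    changes (b :: l) ≤ (if b != x then 1 else 0) + changes (x :: l) := by
  cases l with
  | nil => simp [changes_single]
  | cons y t =>
    rw [changes_cons_cons, changes_cons_cons]
    cases b <;> cases x <;> cases y <;> simp <;> omega

lemma changes_mono_cons {l₁ l₂ : List Bool} (h : l₁.Sublist l₂) :
    ∀ b, changes (b :: l₁) ≤ changes (b :: l₂) := by
  induction h with
  | slnil => intro b; exact le_refl _
  | cons x h ih =>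
    intro b
    calc changes (b :: _) ≤ _ := ih b
    _ ≤ _ := by
        refine le_trans (changes_cons_le_cons b x _) ?_
        rw [changes_cons_cons]
  | cons_cons x h ih =>
    intro b
    rw [changes_cons_cons, changes_cons_cons]
    exact Nat.add_le_add_left (ih x) _

lemma changes_mono {l₁ l₂ : List Bool} (h : l₁.Sublist l₂) : changes l₁ ≤ changes l₂ := by
  induction h with
  | slnil => exact le_refl _
  | cons x h ih => exact le_trans ih (changes_le_cons x _)
  | cons_cons x h ih => exact changes_mono_cons h x

lemma blocks_mono {l₁ l₂ : List Bool} (h : l₁.Sublist l₂) : blocks l₁ ≤ blocks l₂ := by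
  unfold blocks
  rcases eq_or_ne l₁ [] with h1 | h1
  · simp [h1]
  · have h2 : l₂ ≠ [] := by
      intro h2; exact h1 (List.sublist_nil.mp (h2 ▸ h))
    simp [h1, h2]
    exact changes_mono h

lemma changes_append (s t : List Bool) : changes s + changes t ≤ changes (s ++ t) := by
  induction s with
  | nil => simp [changes]
  | cons a s ih =>
    cases s with
    | nil =>
      simp only [List.nil_append, List.singleton_append]
      have : changes [a] = 0 := rfl
      rw [this]
      cases t with
      | nil => simp [changes]
      | cons x t => rw [changes_cons_cons]; omega
    | cons b s' =>
      rw [List.cons_append, List.cons_append, changes_cons_cons, changes_cons_cons,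
        ← List.cons_append]
      omega

lemma const_of_changes_zero {s : List Bool} (h : changes s = 0) :
    ∀ a ∈ s, ∀ c ∈ s, a = c := by
  induction s with
  | nil => simp
  | cons x t ih =>
    have ht : changes t = 0 ∧ ∀ a ∈ t, x = a := by
      cases t with
      | nil => simp [changes]
      | cons y t' =>
        rw [changes_cons_cons] at h
        have h1 : changes (y :: t') = 0 := by omega
        have h2 : x = y := by
          by_contra hxy
          have : (x != y) = true := bne_iff_ne.mpr hxy
          simp [this] at h
        refine ⟨h1, ?_⟩
        intro a ha
        rcases List.mem_cons.mp ha with rfl | ha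
        · exact h2
        · exact h2.trans (ih h1 y (by simp) a (by simp [ha]))
    intro a ha c hc
    have h3 : ∀ z ∈ x :: t, x = z := by
      intro z hz
      rcases List.mem_cons.mp hz with rfl | hz
      · rfl
      · exact ht.2 z hz
    exact (h3 a ha).symm.trans (h3 c hc)

lemma sum_chunk_changes (q : ℕ) : ∀ (m : ℕ) (s : List Bool),
    (∑ j ∈ Finset.range m, changes ((s.drop (j*q)).take q)) ≤ changes s := by
  intro m
  induction m with
  | zero => simp
  | succ m ih =>
    intro s
    rw [Finset.sum_range_succ']
    simp only [Nat.zero_mul, List.drop_zero]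
    have key : ∀ j : ℕ, (s.drop ((j+1)*q)) = ((s.drop q).drop (j*q)) := by
      intro j; rw [List.drop_drop]; ring_nf
    calc (∑ j ∈ Finset.range m, changes ((s.drop ((j+1)*q)).take q)) + changes (s.take q)
        = (∑ j ∈ Finset.range m, changes (((s.drop q).drop (j*q)).take q)) + changes (s.take q) := by
          simp only [key]
      _ ≤ changes (s.drop q) + changes (s.take q) := Nat.add_le_add_right (ih _) _
      _ ≤ changes (s.take q ++ s.drop q) := by rw [Nat.add_comm]; exact changes_append _ _
      _ = changes s := by rw [List.take_append_drop]

lemma sort_sublist {s t : Finset ℕ} (h : s ⊆ t) :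
    (Finset.sort s (· ≤ ·)).Sublist (Finset.sort t (· ≤ ·)) := by
  apply List.sublist_of_subperm_of_pairwise _ (Finset.pairwise_sort _ _) (Finset.pairwise_sort _ _)
  apply List.subperm_of_subset (Finset.sort_nodup _ _)
  intro a ha
  rw [Finset.mem_sort] at ha ⊢
  exact h ha

lemma rec_main (f : ℕ → ℕ → Bool) (k : ℕ) (hk : 9 ≤ k) :
    ∀ d (S : Finset ℕ),
    (∀ x ∈ S, ∀ Y ⊆ S, (∀ y ∈ Y, x < y) → blocks ((Finset.sort Y (· ≤ ·)).map (f x)) ≤ k) →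
    (8*(k+1))^d ≤ S.card →
    ∃ A ⊆ S, A.card = 2^d ∧ VerySimple A f := by
  intro d
  induction d with
  | zero =>
    intro S hS hcard
    simp only [pow_zero] at hcard
    obtain ⟨a, ha⟩ := Finset.card_pos.mp hcard
    exact ⟨{a}, Finset.singleton_subset_iff.mpr ha, by simp, VerySimple.single a f⟩
  | succ d ih =>
    intro S hS hcard
    classical
    set n := (8*(k+1))^d with hn_def
    have hn : 1 ≤ n := Nat.one_le_iff_ne_zero.mpr (pow_ne_zero _ (by omega))
    have hcard' : 8*(k+1)*n ≤ S.card := by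
      rw [pow_succ] at hcard; calc 8*(k+1)*n = n * (8*(k+1)) := by ring
      _ ≤ S.card := hcard
    set L := Finset.sort S (· ≤ ·) with hL_def
    have hLlen : L.length = S.card := Finset.length_sort _
    have hLnd : L.Nodup := Finset.sort_nodup _ _
    set m := 4*(k+1)*n with hm_def
    have e1 : 8*(k+1)*n = 4*(k+1)*n + 4*(k+1)*n := by ring
    have e8 : 0 < 4*(k+1)*n := by positivity
    have hmL : m ≤ L.length := by omega
    set LX := L.take m with hLX_def
    set LD := L.drop m with hLD_def
    have hLXnd : LX.Nodup := (List.take_sublist _ _).nodup hLnd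
    have hLDnd : LD.Nodup := (List.drop_sublist _ _).nodup hLnd
    have hLXlen : LX.length = m := by rw [hLX_def, List.length_take]; omega
    have hLDlen : LD.length = S.card - m := by rw [hLD_def, List.length_drop]; omega
    set X : Finset ℕ := LX.toFinset with hX_def
    set Y : Finset ℕ := LD.toFinset with hY_def
    have hXcard : X.card = m := by rw [hX_def, List.toFinset_card_of_nodup hLXnd, hLXlen]
    have hYcard : Y.card = S.card - m := by rw [hY_def, List.toFinset_card_of_nodup hLDnd, hLDlen]
    have memLS : ∀ a ∈ L, a ∈ S := fun a ha => (Finset.mem_sort _).mp ha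
    have hXS : X ⊆ S := fun a ha =>
      memLS a ((List.take_sublist _ _).mem (List.mem_toFinset.mp ha))
    have hYS : Y ⊆ S := fun a ha =>
      memLS a ((List.drop_sublist _ _).mem (List.mem_toFinset.mp ha))
    have hXY : ∀ x ∈ X, ∀ y ∈ Y, x < y := by
      have hp : (LX ++ LD).Pairwise (· < ·) := by
        rw [hLX_def, hLD_def, List.take_append_drop]
        exact (Finset.sortedLT_sort S).pairwise
      intro x hx y hy
      exact (List.pairwise_append.mp hp).2.2 x (List.mem_toFinset.mp hx) y (List.mem_toFinset.mp hy)
    have hsortY : Finset.sort Y (· ≤ ·) = LD := by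
      rw [hY_def]
      exact (List.toFinset_sort _ hLDnd).mpr
        ((Finset.sortedLT_sort S).pairwise.sublist (List.drop_sublist _ _) |>.imp le_of_lt)
    set q := 4*n with hq_def
    set C : ℕ → List ℕ := fun j => (LD.drop (j*q)).take q with hC_def
    have hYbig : 4*(k+1)*n ≤ LD.length := by omega
    have e2 : (k+1)*q = 4*(k+1)*n := by rw [hq_def]; ring
    have hCq : ∀ j < k+1, (C j).length = q := by
      intro j hj
      rw [hC_def]
      simp only [List.length_take, List.length_drop]
      have hjq : (j+1)*q = j*q + q := by ring
      have hjk : (j+1)*q ≤ (k+1)*q := Nat.mul_le_mul_right q (by omega)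
      omega
    have hCY : ∀ j, ∀ y ∈ C j, y ∈ Y := by
      intro j y hy
      rw [hY_def, List.mem_toFinset]
      exact ((List.take_sublist _ _).trans (List.drop_sublist _ _)).mem hy
    have key : ∀ x ∈ X, ∃ j < k+1, ∃ b, ∀ y ∈ C j, f x y = b := by
      intro x hx
      by_contra hcon
      push_neg at hcon
      have hblocks : blocks ((Finset.sort Y (· ≤ ·)).map (f x)) ≤ k :=
        hS x (hXS hx) Y hYS (fun y hy => hXY x hx y hy)
      rw [hsortY] at hblocks
      have hLDlen0 : 0 < LD.length := by omega
      have hLDne : (LD.map (f x)) ≠ [] := by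
        simp only [ne_eq, List.map_eq_nil_iff]
        intro hc; rw [hc] at hLDlen0; simp at hLDlen0
      have hchanges : changes (LD.map (f x)) + 1 ≤ k := by
        unfold blocks at hblocks
        rw [if_neg hLDne] at hblocks
        exact hblocks
      have hone : ∀ j ∈ Finset.range (k+1),
          1 ≤ changes (((LD.map (f x)).drop (j*q)).take q) := by
        intro j hj
        rw [Finset.mem_range] at hj
        rw [← List.map_drop, ← List.map_take]
        by_contra hzero
        push_neg at hzero
        have hz : changes ((C j).map (f x)) = 0 := by
          have := Nat.lt_one_iff.mp hzero
          rwa [hC_def]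
        have hne : C j ≠ [] := by
          intro hc
          have := hCq j hj
          rw [hc] at this
          simp [hq_def] at this
          omega
        obtain ⟨y0, hy0⟩ := List.exists_mem_of_ne_nil _ hne
        obtain ⟨y, hyC, hyne⟩ := hcon j hj (f x y0)
        exact hyne (const_of_changes_zero hz (f x y) (List.mem_map_of_mem hyC)
          (f x y0) (List.mem_map_of_mem hy0))
      have hsum : k+1 ≤ ∑ j ∈ Finset.range (k+1),
          changes (((LD.map (f x)).drop (j*q)).take q) := by
        calc k+1 = ∑ _j ∈ Finset.range (k+1), 1 := by simp
        _ ≤ _ := Finset.sum_le_sum hone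
      have := sum_chunk_changes q (k+1) (LD.map (f x))
      omega
    -- pigeonhole
    set idx := (Finset.range (k+1)) ×ˢ (Finset.univ : Finset Bool) with hidx_def
    set G : ℕ × Bool → Finset ℕ := fun p => X.filter (fun x => ∀ y ∈ C p.1, f x y = p.2)
      with hG_def
    have hXsub : X ⊆ idx.biUnion G := by
      intro x hx
      obtain ⟨j, hj, b, hb⟩ := key x hx
      refine Finset.mem_biUnion.mpr ⟨(j, b), ?_, ?_⟩
      · simp [hidx_def, hj]
      · simp only [hG_def, Finset.mem_filter]
        exact ⟨hx, hb⟩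
    have hidxcard : idx.card = 2*(k+1) := by
      rw [hidx_def, Finset.card_product, Finset.card_range]
      simp [Finset.card_univ]
      ring
    have hpigeon : ∃ p ∈ idx, n ≤ (G p).card := by
      by_contra hcon
      push_neg at hcon
      have h1 : X.card ≤ ∑ p ∈ idx, (G p).card :=
        le_trans (Finset.card_le_card hXsub) Finset.card_biUnion_le
      have h2 : ∑ p ∈ idx, ((G p).card + 1) ≤ ∑ _p ∈ idx, n :=
        Finset.sum_le_sum (fun p hp => Nat.succ_le_of_lt (hcon p hp))
      rw [Finset.sum_add_distrib, Finset.sum_const, Finset.sum_const, smul_eq_mul,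
        smul_eq_mul, hidxcard, mul_one] at h2
      have e6 : 2*(k+1)*n + 2*(k+1)*n = 4*(k+1)*n := by ring
      omega
    obtain ⟨⟨j, b⟩, hpid, hpcard⟩ := hpigeon
    have hj : j < k+1 := by
      rw [hidx_def, Finset.mem_product, Finset.mem_range] at hpid
      exact hpid.1
    set X' := G (j, b) with hX'_def
    set Y' : Finset ℕ := (C j).toFinset with hY'_def
    have hX'X : X' ⊆ X := Finset.filter_subset _ _
    have hY'Y : Y' ⊆ Y := fun y hy => hCY j y (List.mem_toFinset.mp hy)
    have hX'S : X' ⊆ S := hX'X.trans hXS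
    have hY'S : Y' ⊆ S := hY'Y.trans hYS
    have hY'card : Y'.card = q := by
      rw [hY'_def, List.toFinset_card_of_nodup
        (((List.take_sublist _ _).trans (List.drop_sublist _ _)).nodup hLDnd), hCq j hj]
    have hsub : ∀ T : Finset ℕ, T ⊆ S →
        (∀ x ∈ T, ∀ Z ⊆ T, (∀ y ∈ Z, x < y) → blocks ((Finset.sort Z (· ≤ ·)).map (f x)) ≤ k) :=
      fun T hT x hx Z hZ hZy => hS x (hT hx) Z (hZ.trans hT) hZy
    obtain ⟨A₁, hA₁sub, hA₁card, hA₁vs⟩ := ih X' (hsub X' hX'S) hpcard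
    obtain ⟨A₂, hA₂sub, hA₂card, hA₂vs⟩ := ih Y' (hsub Y' hY'S) (by omega)
    have hA₁X : ∀ x ∈ A₁, x ∈ X := fun x hx => hX'X (hA₁sub hx)
    have hA₂Y : ∀ y ∈ A₂, y ∈ Y := fun y hy => hY'Y (hA₂sub hy)
    have hAlt : ∀ x ∈ A₁, ∀ y ∈ A₂, x < y := fun x hx y hy =>
      hXY x (hA₁X x hx) y (hA₂Y y hy)
    have hdisj : Disjoint A₁ A₂ := by
      rw [Finset.disjoint_left]
      intro a ha₁ ha₂
      exact absurd (hAlt a ha₁ a ha₂) (lt_irrefl a)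
    refine ⟨A₁ ∪ A₂, ?_, ?_, ?_⟩
    · intro a ha
      rcases Finset.mem_union.mp ha with ha | ha
      · exact hX'S (hA₁sub ha)
      · exact hY'S (hA₂sub ha)
    · rw [Finset.card_union_of_disjoint hdisj, hA₁card, hA₂card, pow_succ]
      ring
    · refine VerySimple.join A₁ A₂ f b hdisj hA₁vs hA₂vs ?_
      intro x hx y hy
      have hxy := hAlt x hx y hy
      constructor
      · intro _
        have hxX' := hA₁sub hx
        rw [hX'_def, hG_def, Finset.mem_filter] at hxX'
        exact hxX'.2 y (List.mem_toFinset.mp (hA₂sub hy))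
      · intro h'; omega


theorem stmt6 : ∃ C : ℕ, ∀ d k : ℕ, 1 ≤ d → C ≤ k →
    ∀ f : ℕ → ℕ → Bool, AtMostUnstable f (Finset.range (k ^ (2 * d))) k →
    ∃ A ⊆ Finset.range (k ^ (2 * d)), A.card = 2 ^ d ∧ VerySimple A f := by
  refine ⟨9, ?_⟩
  intro d k hd hk f hf
  have hS : ∀ x ∈ Finset.range (k^(2*d)), ∀ Y ⊆ Finset.range (k^(2*d)), (∀ y ∈ Y, x < y) →
      blocks ((Finset.sort Y (· ≤ ·)).map (f x)) ≤ k := by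
    intro x hx Y hY hYy
    have h1 : Y ⊆ (Finset.range (k^(2*d))).filter (fun y => x < y) := by
      intro y hy; rw [Finset.mem_filter]; exact ⟨hY hy, hYy y hy⟩
    have h2 := (sort_sublist h1).map (f x)
    exact le_trans (blocks_mono h2) (hf x hx)
  have hcard : (8*(k+1))^d ≤ (Finset.range (k^(2*d))).card := by
    rw [Finset.card_range]
    calc (8*(k+1))^d ≤ (k^2)^d := Nat.pow_le_pow_left (by nlinarith) d
    _ = k^(2*d) := (pow_mul k 2 d).symm
  obtain ⟨A, hA, hAcard, hAvs⟩ := rec_main f k hk d _ hS hcard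
  exact ⟨A, hA, hAcard, hAvs⟩
end
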